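/- Let O(x) = E[(e^{L_T} − e^x)_+] for x ≥ 0 and O(x) = E[(e^x − e^{L_T})_+] for x < 0, where L_T is a random variable with E[e^{L_T}] = 1 and E[e^{2L_T}] < ∞, and let φ_T(z) = E[e^{izL_T}] extended to the strip Im z ∈ [−1, 0]. Then O ∈ L¹(ℝ) and its Fourier transform satisfies ℱO(u) = (1 − φ_T(u − i)) / (u(u − i)) for all real u ≠ 0. -/

import Mathlib

/-!
Write `O x = E[k(x, L)]`, where `k(x, ℓ) = otmPayoff x ℓ` is the payoff at log-price `ℓ`
of the out-of-the-money option with log-strike `x` (a call for `x ≥ 0`, a put for `x < 0`).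
For fixed `ℓ`, `k(·, ℓ)` vanishes off the interval between `0` and `ℓ`, so for every `f`
`∫ k(x, ℓ) f(x) dx = ∫_0^ℓ (e^ℓ - e^x) f(x) dx` as an oriented integral, whatever the sign
of `ℓ`.
With `f(x) = e^{iux}` this is an elementary integral of exponentials,
`(e^{(iu+1)ℓ} - 1) / (iu(iu+1)) - (e^ℓ - 1) / (iu)`.
The bound `k(x, ℓ) ≤ e^{-|x|} (e^{2ℓ} + 1)` and `E[e^{2L}] < ∞` justify Fubini; taking
expectations, the martingale condition `E[e^L] = 1` kills the second term, leaving
`(φ_T(u - i) - 1) / (iu(iu+1)) = (1 - φ_T(u - i)) / (u(u - i))`.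
-/

open MeasureTheory Complex Set

noncomputable def otmPayoff (x ℓ : ℝ) : ℝ :=
  if 0 ≤ x then max (Real.exp ℓ - Real.exp x) 0 else max (Real.exp x - Real.exp ℓ) 0

theorem measurable_otmPayoff : Measurable (Function.uncurry otmPayoff) :=
  Measurable.ite (measurableSet_le measurable_const measurable_fst) (by fun_prop) (by fun_prop)

theorem otmPayoff_nonneg (x ℓ : ℝ) : 0 ≤ otmPayoff x ℓ := by
  unfold otmPayoff; split <;> exact le_max_right _ _

theorem otmPayoff_le (x ℓ : ℝ) :
    otmPayoff x ℓ ≤ Real.exp (-|x|) * (Real.exp (2 * ℓ) + 1) := by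
  unfold otmPayoff
  split_ifs with hx
  · rw [abs_of_nonneg hx]
    refine max_le ?_ (by positivity)
    rcases le_or_gt x ℓ with hxℓ | hℓx
    · have : Real.exp ℓ ≤ Real.exp (-x) * Real.exp (2 * ℓ) := by
        rw [← Real.exp_add]; exact Real.exp_le_exp.mpr (by linarith)
      nlinarith [Real.exp_pos x, Real.exp_pos (-x)]
    · nlinarith [Real.exp_le_exp.mpr hℓx.le, Real.exp_pos (-x), Real.exp_pos (2 * ℓ)]
  · rw [abs_of_neg (not_le.mp hx), neg_neg]
    exact max_le (by nlinarith [Real.exp_pos ℓ, Real.exp_pos x, Real.exp_pos (2 * ℓ)])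
      (by positivity)

theorem otmPayoff_eq_indicator_of_nonneg {ℓ : ℝ} (hℓ : 0 ≤ ℓ) (x : ℝ) :
    otmPayoff x ℓ = (Icc 0 ℓ).indicator (fun x => Real.exp ℓ - Real.exp x) x := by
  unfold otmPayoff
  by_cases hx : 0 ≤ x
  · by_cases hxℓ : x ≤ ℓ
    · simp [hx, hxℓ, Real.exp_le_exp.mpr hxℓ]
    · simp [hx, hxℓ, Real.exp_le_exp.mpr (not_le.mp hxℓ).le]
  · simp [hx, Real.exp_le_exp.mpr ((not_le.mp hx).le.trans hℓ)]

theorem otmPayoff_eq_indicator_of_neg {ℓ : ℝ} (hℓ : ℓ < 0) (x : ℝ) :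
    otmPayoff x ℓ = (Ico ℓ 0).indicator (fun x => Real.exp x - Real.exp ℓ) x := by
  unfold otmPayoff
  by_cases hx : 0 ≤ x
  · simp [hx, not_lt.mpr hx, Real.exp_le_exp.mpr (hℓ.le.trans hx)]
  · by_cases hℓx : ℓ ≤ x
    · simp [hx, hℓx, not_le.mp hx, Real.exp_le_exp.mpr hℓx]
    · simp [hx, hℓx, Real.exp_le_exp.mpr (not_le.mp hℓx).le]

theorem integral_otmPayoff_smul {E : Type*} [NormedAddCommGroup E] [NormedSpace ℝ E]
    (f : ℝ → E) (ℓ : ℝ) :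
    ∫ x, otmPayoff x ℓ • f x = ∫ x in 0..ℓ, (Real.exp ℓ - Real.exp x) • f x := by
  rcases le_or_gt 0 ℓ with hℓ | hℓ
  · simp_rw [otmPayoff_eq_indicator_of_nonneg hℓ, ← indicator_smul_apply_left]
    rw [integral_indicator measurableSet_Icc, integral_Icc_eq_integral_Ioc,
      intervalIntegral.integral_of_le hℓ]
  · simp_rw [otmPayoff_eq_indicator_of_neg hℓ, ← indicator_smul_apply_left]
    rw [integral_indicator measurableSet_Ico, integral_Ico_eq_integral_Ioc,
      intervalIntegral.integral_of_ge hℓ.le, ← integral_neg]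
    simp_rw [← neg_smul, neg_sub]

noncomputable def otmPayoffTransform (u ℓ : ℝ) : ℂ :=
  (exp ((I * u + 1) * ℓ) - 1) / (I * u * (I * u + 1)) - (exp ℓ - 1) / (I * u)

theorem integral_cexp_mul_otmPayoff {u : ℝ} (hu : u ≠ 0) (ℓ : ℝ) :
    ∫ x : ℝ, exp (I * u * x) * (otmPayoff x ℓ : ℂ) = otmPayoffTransform u ℓ := by
  have huC : (u : ℂ) ≠ 0 := ofReal_ne_zero.mpr hu
  have hIu : I * (u : ℂ) ≠ 0 := mul_ne_zero I_ne_zero huC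
  have hIu1 : I * (u : ℂ) + 1 ≠ 0 := fun h => by simpa using congrArg re h
  have hsplit (x : ℝ) : ((Real.exp ℓ - Real.exp x : ℝ) : ℂ) * exp (I * u * x) =
      exp ℓ * exp (I * u * x) - exp ((I * u + 1) * x) := by
    rw [show (I * u + 1) * (x : ℂ) = x + I * u * x by ring, exp_add]
    push_cast
    ring
  simp_rw [mul_comm (exp _), ← real_smul, integral_otmPayoff_smul, real_smul, hsplit]
  rw [intervalIntegral.integral_sub (Continuous.intervalIntegrable (by fun_prop) _ _)
      (Continuous.intervalIntegrable (by fun_prop) _ _),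
    intervalIntegral.integral_const_mul, integral_exp_mul_complex hIu,
    integral_exp_mul_complex hIu1, otmPayoffTransform]
  simp only [ofReal_zero, mul_zero, exp_zero]
  rw [show (I * u + 1) * (ℓ : ℂ) = I * u * ℓ + ℓ by ring, exp_add]
  field_simp
  ring

theorem integrable_exp_neg_abs : Integrable (fun x : ℝ => Real.exp (-|x|)) := by
  rw [← integrableOn_univ, ← Iic_union_Ioi (a := (0 : ℝ))]
  refine IntegrableOn.union ?_ ?_
  · exact (integrableOn_exp_Iic 0).congr_fun
      (fun x hx => by rw [abs_of_nonpos (mem_Iic.mp hx), neg_neg]) measurableSet_Iic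
  · exact (exp_neg_integrableOn_Ioi 0 one_pos).congr_fun
      (fun x hx => by simp [abs_of_pos (mem_Ioi.mp hx)]) measurableSet_Ioi

section Expectation

variable {Ω : Type*} [MeasurableSpace Ω] {P : Measure Ω} {L : Ω → ℝ}

theorem integrable_otmPayoff_prod [IsFiniteMeasure P] (hL : Measurable L)
    (hmom : Integrable (fun ω => Real.exp (2 * L ω)) P) :
    Integrable (fun p : ℝ × Ω => otmPayoff p.1 (L p.2)) (volume.prod P) := by
  have hmeas : Measurable fun p : ℝ × Ω => otmPayoff p.1 (L p.2) :=
    measurable_otmPayoff.comp (measurable_fst.prodMk (hL.comp measurable_snd))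
  refine (integrable_exp_neg_abs.mul_prod (hmom.add (integrable_const 1))).mono'
    hmeas.aestronglyMeasurable (.of_forall fun p => ?_)
  rw [Real.norm_of_nonneg (otmPayoff_nonneg _ _)]
  exact otmPayoff_le _ _

theorem integrable_cexp_mul_otmPayoff_prod [IsFiniteMeasure P] (hL : Measurable L)
    (hmom : Integrable (fun ω => Real.exp (2 * L ω)) P) (u : ℝ) :
    Integrable (fun p : ℝ × Ω => exp (I * u * p.1) * (otmPayoff p.1 (L p.2) : ℂ))
      (volume.prod P) :=
  (integrable_otmPayoff_prod hL hmom).ofReal.bdd_mul (c := 1) (by fun_prop)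
    (.of_forall fun p => by
      rw [show I * u * (p.1 : ℂ) = ((u * p.1 : ℝ) : ℂ) * I by push_cast; ring,
        norm_exp_ofReal_mul_I])

theorem integral_cexp_mul_integral_otmPayoff [IsFiniteMeasure P] (hL : Measurable L)
    (hmom : Integrable (fun ω => Real.exp (2 * L ω)) P) {u : ℝ} (hu : u ≠ 0) :
    ∫ x : ℝ, exp (I * u * x) * ((∫ ω, otmPayoff x (L ω) ∂P : ℝ) : ℂ) =
      ∫ ω, otmPayoffTransform u (L ω) ∂P := by
  simp_rw [← integral_complex_ofReal, ← integral_const_mul]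
  rw [integral_integral_swap (integrable_cexp_mul_otmPayoff_prod hL hmom u)]
  simp_rw [integral_cexp_mul_otmPayoff hu]

theorem integrable_cexp_mul_of_re_eq_one {z : ℂ} (hz : z.re = 1) (hL : Measurable L)
    (hexp : Integrable (fun ω => Real.exp (L ω)) P) :
    Integrable (fun ω => exp (z * L ω)) P :=
  hexp.mono' (by fun_prop) (.of_forall fun ω => by simp [norm_exp, hz])

theorem integral_otmPayoffTransform [IsProbabilityMeasure P] (hL : Measurable L)
    (hmart : ∫ ω, Real.exp (L ω) ∂P = 1) (u : ℝ) :
    ∫ ω, otmPayoffTransform u (L ω) ∂P =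
      ((∫ ω, exp ((I * u + 1) * L ω) ∂P) - 1) / (I * u * (I * u + 1)) := by
  have hexp : Integrable (fun ω => Real.exp (L ω)) P := .of_integral_ne_zero (by simp [hmart])
  have hφ : Integrable (fun ω => exp ((I * u + 1) * L ω)) P :=
    integrable_cexp_mul_of_re_eq_one (by simp) hL hexp
  have hexpC : Integrable (fun ω => exp (L ω : ℂ)) P := by simpa using hexp.ofReal (𝕜 := ℂ)
  have hE : ∫ ω, exp (L ω : ℂ) ∂P = 1 := by
    rw [← ofReal_one, ← hmart, ← integral_complex_ofReal]
    simp only [ofReal_exp]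
  have hφ1 : Integrable (fun ω => exp ((I * u + 1) * L ω) - 1) P := hφ.sub (integrable_const 1)
  have hexpC1 : Integrable (fun ω => exp (L ω : ℂ) - 1) P := hexpC.sub (integrable_const 1)
  unfold otmPayoffTransform
  rw [integral_sub (hφ1.div_const _) (hexpC1.div_const _), integral_div,
    integral_div, integral_sub hφ (integrable_const 1), integral_sub hexpC (integrable_const 1),
    hE, integral_const, probReal_univ, one_smul, sub_self, zero_div, sub_zero]

end Expectation

/-- Carr–Madan pricing formula: with `O` the option function of `L_T`
(satisfying the martingale condition `E[e^{L_T}] = 1` and `E[e^{2L_T}] < ∞`),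
`O ∈ L¹(ℝ)` and `ℱO(u) = (1 − φ_T(u−i))/(u(u−i))` for `u ≠ 0`, where
`φ_T(u−i) = E[e^{(iu+1)L_T}]`. -/
theorem stmt10 (Ω : Type*) [MeasurableSpace Ω] (P : Measure Ω) [IsProbabilityMeasure P]
    (L : Ω → ℝ) (hL : Measurable L)
    (hmart : (∫ ω, Real.exp (L ω) ∂P) = 1)
    (hmom : Integrable (fun ω => Real.exp (2 * L ω)) P)
    (O : ℝ → ℝ)
    (hO : ∀ x : ℝ, O x = if 0 ≤ x then ∫ ω, max (Real.exp (L ω) - Real.exp x) 0 ∂P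
      else ∫ ω, max (Real.exp x - Real.exp (L ω)) 0 ∂P) :
    Integrable O ∧ ∀ u : ℝ, u ≠ 0 →
      (∫ x : ℝ, Complex.exp (I * (u : ℂ) * (x : ℂ)) * (O x : ℂ)) =
        (1 - ∫ ω, Complex.exp ((I * (u : ℂ) + 1) * (L ω : ℂ)) ∂P) /
          ((u : ℂ) * ((u : ℂ) - I)) := by
  obtain rfl : O = fun x => ∫ ω, otmPayoff x (L ω) ∂P :=
    funext fun x => by rw [hO x]; unfold otmPayoff; split_ifs <;> rfl
  refine ⟨(integrable_otmPayoff_prod hL hmom).integral_prod_left, fun u hu => ?_⟩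
  rw [integral_cexp_mul_integral_otmPayoff hL hmom hu, integral_otmPayoffTransform hL hmart,
    show I * u * (I * u + 1) = -((u : ℂ) * (u - I)) by linear_combination (u : ℂ) ^ 2 * I_mul_I,
    div_neg, ← neg_div, neg_sub]
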